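/- arXiv:2408.08190 — 2 statements merged into one kernel-verified Lean document; each statement's English description precedes it below -/
import Mathlib

section
/- Let Q be a real orthogonal n×n matrix, λ : n → ℝ with all λ_i > 0, K = Qᵀ·diagonal(λ)·Q, and Y ∈ ℝⁿ. Define f(t) = (I − exp(−t·K))·Y. Then f(t) → Y as t → ∞. (This is the paper's claim that under NTK gradient-flow dynamics with a positive definite kernel the network output converges to the training targets.) -/
/-!
Conjugating by the orthogonal matrix `Q` diagonalises the kernel, so
`exp (-t K) = Qᵀ · diagonal (exp (-t λᵢ)) · Q`. Every `λᵢ > 0`, hence each diagonal entry decays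
to `0`, so `exp (-t K) → 0` and `f t = (1 - exp (-t K)) Y → Y`.
-/

open Filter Topology NormedSpace Matrix

namespace Matrix

variable {n : Type*} [Fintype n] [DecidableEq n]

theorem exp_mul_mul_of_mul_eq_one {𝔸 : Type*} [NormedCommRing 𝔸] [NormedAlgebra ℚ 𝔸]
    [CompleteSpace 𝔸] {P Q : Matrix n n 𝔸} (hPQ : P * Q = 1) (A : Matrix n n 𝔸) :
    exp (P * A * Q) = P * exp A * Q := by
  have hinv : Q⁻¹ = P := inv_eq_left_inv hPQ
  have hQ : IsUnit Q := (isUnit_iff_isUnit_det Q).2 (isUnit_det_of_left_inverse hPQ)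
  simpa only [hinv] using exp_conj' Q A hQ

theorem exp_smul_diagonal (t : ℝ) (l : n → ℝ) :
    exp (t • diagonal l) = diagonal fun i => Real.exp (t * l i) := by
  rw [← diagonal_smul, exp_diagonal, Pi.exp_def, Real.exp_eq_exp_ℝ]
  rfl

theorem tendsto_exp_neg_smul_diagonal_atTop {l : n → ℝ} (hl : ∀ i, 0 < l i) :
    Tendsto (fun t : ℝ => exp ((-t) • diagonal l)) atTop (𝓝 0) := by
  have hdecay : ∀ i, Tendsto (fun t : ℝ => Real.exp (-t * l i)) atTop (𝓝 0) := fun i =>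
    Real.tendsto_exp_atBot.comp (tendsto_neg_atTop_atBot.atBot_mul_const (hl i))
  simp_rw [exp_smul_diagonal]
  rw [← diagonal_zero]
  exact (continuous_id.matrix_diagonal.tendsto _).comp (tendsto_pi_nhds.2 hdecay)

theorem tendsto_exp_neg_smul_transpose_mul_diagonal_mul_atTop {Q : Matrix n n ℝ}
    (hQ : Qᵀ * Q = 1) {l : n → ℝ} (hl : ∀ i, 0 < l i) :
    Tendsto (fun t : ℝ => exp ((-t) • (Qᵀ * diagonal l * Q))) atTop (𝓝 0) := by
  have hconj : ∀ t : ℝ, exp ((-t) • (Qᵀ * diagonal l * Q)) =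
      Qᵀ * exp ((-t) • diagonal l) * Q := fun t => by
    rw [← exp_mul_mul_of_mul_eq_one hQ, Matrix.mul_smul, Matrix.smul_mul]
  simpa only [hconj, Matrix.mul_zero, Matrix.zero_mul] using
    ((tendsto_exp_neg_smul_diagonal_atTop hl).const_mul Qᵀ).mul_const Q

end Matrix

/-- Under NTK gradient-flow dynamics with a positive definite kernel, the network output
converges to the training targets: `f t → Y` as `t → ∞`. -/
theorem ntk_dynamics_tendsto {n : Type*} [Fintype n] [DecidableEq n]
    (Q : Matrix n n ℝ) (hQ : Q.transpose * Q = 1) (l : n → ℝ) (hl : ∀ i, 0 < l i)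
    (Y : n → ℝ) (f : ℝ → n → ℝ)
    (hf : ∀ t : ℝ, f t =
      ((1 : Matrix n n ℝ) -
        NormedSpace.exp ((-t) • (Q.transpose * Matrix.diagonal l * Q))).mulVec Y) :
    Tendsto f atTop (nhds Y) := by
  have hcont : Continuous fun M : Matrix n n ℝ => (1 - M) *ᵥ Y :=
    (continuous_const.sub continuous_id).matrix_mulVec continuous_const
  have hlim :=
    (hcont.tendsto 0).comp (tendsto_exp_neg_smul_transpose_mul_diagonal_mul_atTop hQ hl)
  rw [sub_zero, one_mulVec] at hlim
  exact hlim.congr fun t => (hf t).symm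
end

section
/- Let Q be a real orthogonal n×n matrix, λ : n → ℝ, K = Qᵀ·diagonal(λ)·Q, and Y ∈ ℝⁿ, and define f(t) = (I − exp(−t·K))·Y. Suppose i, j are indices with λ_i > λ_j, (Q·Y)_i ≠ 0 and (Q·Y)_j ≠ 0. Then for every t > 0 the relative residual of the i-th eigencomponent is strictly smaller than that of the j-th: |(Q·(f(t) − Y))_i| / |(Q·Y)_i| < |(Q·(f(t) − Y))_j| / |(Q·Y)_j|. -/
open Matrix

lemma ntk_residual_component {n : Type*} [Fintype n] [DecidableEq n]
    (Q : Matrix n n ℝ) (hQ : Q.transpose * Q = 1) (l : n → ℝ) (Y : n → ℝ)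
    (t : ℝ) (i : n) :
    Q.mulVec ((((1 : Matrix n n ℝ) -
        NormedSpace.exp ((-t) • (Q.transpose * Matrix.diagonal l * Q))).mulVec Y) - Y) i
      = -(Real.exp (-t * l i) * Q.mulVec Y i) := by
  have hinv : Q.transpose⁻¹ = Q := Matrix.inv_eq_right_inv hQ
  have hQQ : Q * Q.transpose = 1 := mul_eq_one_comm.mp hQ
  have hsmul : (-t) • (Q.transpose * Matrix.diagonal l * Q)
      = Q.transpose * ((-t) • Matrix.diagonal l) * Q.transpose⁻¹ := by
    rw [hinv]
    simp [Matrix.mul_smul, Matrix.smul_mul]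
  have hexp : NormedSpace.exp ((-t) • (Q.transpose * Matrix.diagonal l * Q))
      = Q.transpose * NormedSpace.exp ((-t) • Matrix.diagonal l) * Q := by
    rw [hsmul, Matrix.exp_conj Q.transpose _ (⟨⟨Q.transpose, Q, hQ, hQQ⟩, rfl⟩ : IsUnit Q.transpose), hinv]
  have hdiag : (-t) • Matrix.diagonal l = Matrix.diagonal (fun k => -t * l k) := by
    rw [← Matrix.diagonal_smul]; congr 1
  have hexpd : NormedSpace.exp ((-t) • Matrix.diagonal l)
      = Matrix.diagonal (fun k => Real.exp (-t * l k)) := by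
    rw [hdiag, Matrix.exp_diagonal, Pi.exp_def]
    simp_rw [← Real.exp_eq_exp_ℝ]
  have key : Q * NormedSpace.exp ((-t) • (Q.transpose * Matrix.diagonal l * Q))
      = Matrix.diagonal (fun k => Real.exp (-t * l k)) * Q := by
    rw [hexp, hexpd, ← Matrix.mul_assoc, ← Matrix.mul_assoc, hQQ, Matrix.one_mul]
  have : Q.mulVec ((((1 : Matrix n n ℝ) -
        NormedSpace.exp ((-t) • (Q.transpose * Matrix.diagonal l * Q))).mulVec Y) - Y)
      = -((Matrix.diagonal (fun k => Real.exp (-t * l k)) * Q).mulVec Y) := by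
    rw [← key]
    rw [Matrix.sub_mulVec, Matrix.one_mulVec]
    rw [sub_sub_cancel_left, Matrix.mulVec_neg, Matrix.mulVec_mulVec]
  rw [this]
  simp [Matrix.mulVec_mulVec, ← Matrix.mulVec_mulVec, Matrix.mulVec_diagonal]

/-- Spectral bias: eigencomponents of the target along eigenvectors with larger eigenvalues
are learned faster, i.e. have strictly smaller relative residuals at every positive time. -/
theorem ntk_spectral_bias {n : Type*} [Fintype n] [DecidableEq n]
    (Q : Matrix n n ℝ) (hQ : Q.transpose * Q = 1) (l : n → ℝ) (Y : n → ℝ)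
    (f : ℝ → n → ℝ)
    (hf : ∀ t : ℝ, f t =
      ((1 : Matrix n n ℝ) -
        NormedSpace.exp ((-t) • (Q.transpose * Matrix.diagonal l * Q))).mulVec Y)
    (i j : n) (hij : l j < l i) (hYi : Q.mulVec Y i ≠ 0) (hYj : Q.mulVec Y j ≠ 0) :
    ∀ t : ℝ, 0 < t →
      |Q.mulVec (f t - Y) i| / |Q.mulVec Y i| <
        |Q.mulVec (f t - Y) j| / |Q.mulVec Y j| := by
  intro t ht
  have hi := ntk_residual_component Q hQ l Y t i
  have hj := ntk_residual_component Q hQ l Y t j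
  rw [hf t] at *
  rw [hi, hj, abs_neg, abs_neg, abs_mul, abs_mul,
    Real.abs_exp, Real.abs_exp,
    mul_div_assoc, mul_div_assoc, div_self (abs_ne_zero.mpr hYi),
    div_self (abs_ne_zero.mpr hYj), mul_one, mul_one]
  exact Real.exp_lt_exp.mpr (by nlinarith)
end
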